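/- Let n ≥ 1 and let c ∈ ℝ^n with c_i ∉ ℤ for some index i. Then the hyperplane h = {x ∈ ℝ^n : ∑_{i=1}^n c_i x_i = 1} has weight w(h) ≤ 1 − 1/n. -/

import Mathlib

/-!
The term of `S` in the weight equals `(|S| - 1)! (n - |S|)! / n!`. Call `S` a level set if
`∑_{i ∈ S} c i = 1`. By the cycle lemma, every rotation class of orderings of a level set contains
an ordering none of whose nonempty proper prefixes sums to `1`, and since `c j ∉ ℤ` it can be
chosen not to start with `j`. Followed by an ordering of `Sᶜ`, this yields at least
`(|S| - 1)! (n - |S|)!` orderings of `[n]` per level set `S`. They are distinct for distinct `S`,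
since `S` is recovered as the first prefix summing to `1`, and none of them starts with `j`, so
the numerators add up to at most `n! - (n - 1)!`.
-/

open scoped Classical in
/-- The Clifton–Huang weight of the hyperplane `{x : ∑ i, c i * x i = 1}`:
the sum over nonempty subsets `S ⊆ [n]` with `∑_{i ∈ S} c i = 1` of
`1 / (|S| * binom(n, |S|))`. -/
noncomputable def hyperplaneWeight {n : ℕ} (c : Fin n → ℝ) : ℝ :=
  ∑ S : Finset (Fin n),
    if S.Nonempty ∧ ∑ i ∈ S, c i = 1 then
      1 / (S.card * (n.choose S.card)) else 0

open Finset

namespace Finset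

variable {α : Type*} [LinearOrder α] {s : Finset α} {l : List α}

def arrangements (s : Finset α) : Finset (List α) :=
  (s.sort (· ≤ ·)).permutations.toFinset

theorem mem_arrangements : l ∈ s.arrangements ↔ l.Nodup ∧ l.toFinset = s := by
  rw [arrangements, List.mem_toFinset, List.mem_permutations]
  constructor
  · intro h
    exact ⟨h.nodup_iff.mpr (s.sort_nodup _), by rw [List.toFinset_eq_of_perm _ _ h, sort_toFinset]⟩
  · rintro ⟨hnd, rfl⟩
    exact List.perm_of_nodup_nodup_toFinset_eq hnd (sort_nodup _ _) (by rw [sort_toFinset])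

theorem card_arrangements (s : Finset α) : #s.arrangements = (#s).factorial := by
  rw [arrangements, List.toFinset_card_of_nodup (List.nodup_permutations _ (sort_nodup _ _)),
    List.length_permutations, length_sort]

theorem cons_mem_arrangements {a : α} (ha : a ∈ s) (hl : l ∈ (s.erase a).arrangements) :
    a :: l ∈ s.arrangements := by
  obtain ⟨hnd, hl⟩ := mem_arrangements.mp hl
  refine mem_arrangements.mpr ⟨List.nodup_cons.mpr ⟨?_, hnd⟩, ?_⟩
  · rw [← List.mem_toFinset, hl]
    exact notMem_erase a s
  · rw [List.toFinset_cons, hl, insert_erase ha]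

theorem append_mem_arrangements [Fintype α] {S : Finset α} {ρ τ : List α}
    (hρ : ρ ∈ S.arrangements) (hτ : τ ∈ Sᶜ.arrangements) : ρ ++ τ ∈ univ.arrangements := by
  obtain ⟨hρnd, hρS⟩ := mem_arrangements.mp hρ
  obtain ⟨hτnd, hτS⟩ := mem_arrangements.mp hτ
  refine mem_arrangements.mpr ⟨hρnd.append hτnd fun x hxρ hxτ => ?_, ?_⟩
  · rw [← List.mem_toFinset, hρS] at hxρ
    rw [← List.mem_toFinset, hτS] at hxτ
    exact mem_compl.mp hxτ hxρ
  · rw [List.toFinset_append, hρS, hτS, union_compl]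

theorem sum_map_of_mem_arrangements {M : Type*} [AddCommMonoid M] (f : α → M)
    (h : l ∈ s.arrangements) : (l.map f).sum = ∑ i ∈ s, f i := by
  obtain ⟨hnd, rfl⟩ := mem_arrangements.mp h
  exact (List.sum_toFinset f hnd).symm

theorem card_image_cons_arrangements_erase {a : α} (ha : a ∈ s) :
    #((s.erase a).arrangements.image (a :: ·)) = (#s - 1).factorial := by
  rw [card_image_of_injective _ List.cons_injective, card_arrangements, card_erase_of_mem ha]

end Finset

namespace List

def ProperPrefixSumsNeOne (v : List ℝ) : Prop :=
  ∀ k, 0 < k → k < v.length → (v.take k).sum ≠ 1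

theorem ProperPrefixSumsNeOne.length_le {v w x y : List ℝ} (hw : w.ProperPrefixSumsNeOne)
    (hv : v.sum = 1) (h : v ++ x = w ++ y) : w.length ≤ v.length := by
  by_contra! hlt
  have hvw : v <+: w :=
    prefix_of_prefix_length_le (prefix_append v x) (h ▸ prefix_append w y) hlt.le
  have hv0 : 0 < v.length := length_pos_of_ne_nil (by rintro rfl; simp at hv)
  exact hw v.length hv0 hlt (prefix_iff_eq_take.mp hvw ▸ hv)

variable {M : Type*} [AddCommGroup M]

theorem sum_take_rotate_of_add_le (v : List M) {r k : ℕ} (hrk : r + k ≤ v.length) :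
    ((v.rotate r).take k).sum = (v.take (r + k)).sum - (v.take r).sum := by
  rw [rotate_eq_drop_append_take (by omega), take_append_of_le_length (by simp; omega),
    take_add, sum_append]
  abel

theorem sum_take_rotate_of_le_add (v : List M) {r k : ℕ} (hr : r ≤ v.length)
    (hk : k ≤ v.length) (hrk : v.length ≤ r + k) :
    ((v.rotate r).take k).sum = v.sum - (v.take r).sum + (v.take (r + k - v.length)).sum := by
  have hsplit : (v.take r).sum + (v.drop r).sum = v.sum := by
    rw [← sum_append, take_append_drop]
  rw [rotate_eq_drop_append_take hr, take_append, take_of_length_le (by simp; omega),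
    take_take, length_drop, min_eq_left (by omega), sum_append, ← hsplit,
    show k - (v.length - r) = r + k - v.length by omega]
  abel

/-- Cycle lemma: start the rotation at the first position, among those whose prefix sum is
congruent to the one at `m₀` modulo `ℤ`, where the prefix sum is largest. -/
theorem exists_rotate_properPrefixSumsNeOne (v : List ℝ) (hv : v.sum = 1) {m₀ : ℕ}
    (hm₀ : m₀ < v.length) :
    ∃ r < v.length, (∃ z : ℤ, (v.take r).sum = (v.take m₀).sum + z) ∧
      (v.rotate r).ProperPrefixSumsNeOne := by
  classical
  set s : ℕ → ℝ := fun k => (v.take k).sum with hs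
  set C := (Finset.range v.length).filter fun m => ∃ z : ℤ, s m = s m₀ + z
  have mem_C {m : ℕ} : m ∈ C ↔ m < v.length ∧ ∃ z : ℤ, s m = s m₀ + z := by
    simp [C]
  obtain ⟨r₀, hr₀, hmax₀⟩ := C.exists_max_image s ⟨m₀, mem_C.mpr ⟨hm₀, 0, by simp⟩⟩
  have hex : ∃ r, r ∈ C ∧ ∀ m ∈ C, s m ≤ s r := ⟨r₀, hr₀, hmax₀⟩
  obtain ⟨hrC, hmax⟩ := Nat.find_spec hex
  set r := Nat.find hex
  have hfirst {m : ℕ} (hm : m ∈ C) (hsm : s m = s r) : r ≤ m :=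
    Nat.find_min' hex ⟨hm, fun m' hm' => hsm ▸ hmax m' hm'⟩
  obtain ⟨hrlen, z, hz⟩ := mem_C.mp hrC
  refine ⟨r, hrlen, ⟨z, hz⟩, fun k hk0 hklen hsum => ?_⟩
  rw [length_rotate] at hklen
  rcases Nat.lt_or_ge (r + k) v.length with hlt | hge
  · have hstep : s (r + k) = s r + 1 := by
      rw [sum_take_rotate_of_add_le v hlt.le] at hsum
      simp only [hs]
      linarith
    have hmem : r + k ∈ C := mem_C.mpr ⟨hlt, z + 1, by push_cast; linarith⟩
    linarith [hmax _ hmem]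
  · rw [sum_take_rotate_of_le_add v hrlen.le hklen.le hge, hv] at hsum
    rcases hge.eq_or_lt with heq | hgt
    · have hr0 : s r = 0 := by simpa [← heq, hs] using hsum
      have h0C : 0 ∈ C := mem_C.mpr ⟨by omega, z, by simp [hs] at hr0 ⊢; linarith⟩
      have := hfirst h0C (by rw [hr0]; simp [hs])
      omega
    · have hi : s (r + k - v.length) = s r := by simp only [hs]; linarith
      have hiC : r + k - v.length ∈ C := mem_C.mpr ⟨by omega, z, hi.trans hz⟩
      have := hfirst hiC hi
      omega

theorem Nodup.eq_of_rotate_eq_rotate {α : Type*} {l l' : List α} (hl : l.Nodup)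
    (hhead : l.head? = l'.head?) {m m' : ℕ} (h : l.rotate m = l'.rotate m') : l = l' := by
  obtain ⟨k, rfl⟩ : l ~r l' :=
    (IsRotated.forall l m).symm.trans (by rw [h]; exact IsRotated.forall l' m')
  rcases eq_or_ne l [] with rfl | hne
  · simp
  have hlen := length_pos_of_ne_nil hne
  rw [← rotate_mod, head?_rotate (Nat.mod_lt _ hlen), head?_eq_getElem?,
    getElem?_eq_getElem (Nat.mod_lt _ hlen), getElem?_eq_getElem hlen, Option.some_inj,
    hl.getElem_inj_iff] at hhead
  rw [← rotate_mod, ← hhead, rotate_zero]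

end List

section

variable {α : Type*}

/-- If `π` starts with `j`, run the cycle lemma from position `1`: the start it returns has a
prefix sum congruent to `c j ∉ ℤ`, so it is not position `0`. -/
theorem exists_rotate_properPrefixSumsNeOne_head?_ne (c : α → ℝ) {j : α}
    (hj : ¬ ∃ m : ℤ, (m : ℝ) = c j) {π : List α} (hπ : π.Nodup) (hsum : (π.map c).sum = 1)
    (hhead : j ∈ π → π.head? = some j) :
    ∃ r, ((π.rotate r).map c).ProperPrefixSumsNeOne ∧ (π.rotate r).head? ≠ some j := by
  have hne : π ≠ [] := by rintro rfl; simp at hsum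
  simp_rw [List.map_rotate]
  by_cases hjπ : j ∈ π
  · obtain ⟨t, rfl⟩ : ∃ t, π = j :: t := by
      obtain ⟨a, t, rfl⟩ := List.exists_cons_of_ne_nil hne
      exact ⟨t, by simpa using hhead hjπ⟩
    have ht : t ≠ [] := by
      rintro rfl
      exact hj ⟨1, by simpa using hsum.symm⟩
    obtain ⟨r, hr, ⟨z, hz⟩, hgood⟩ := List.exists_rotate_properPrefixSumsNeOne _ hsum (m₀ := 1)
      (by simpa using List.length_pos_of_ne_nil ht)
    refine ⟨r, hgood, fun hjr => ?_⟩
    rw [List.length_map] at hr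
    have hr0 : r ≠ 0 := by
      rintro rfl
      exact hj ⟨-z, by simp at hz; push_cast; linarith⟩
    rw [List.head?_rotate hr, List.getElem?_eq_getElem hr, Option.some_inj] at hjr
    exact hr0 ((hπ.getElem_inj_iff (j := 0) (hj := by simp)).mp hjr)
  · obtain ⟨r, -, -, hgood⟩ := List.exists_rotate_properPrefixSumsNeOne _ hsum (m₀ := 0)
      (by simpa using List.length_pos_of_ne_nil hne)
    exact ⟨r, hgood, fun hjr => hjπ (List.mem_rotate.mp (List.mem_of_mem_head? hjr))⟩

theorem card_le_card_of_forall_exists_rotate_mem {D G : Finset (List α)} {a : α}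
    (hD : ∀ π ∈ D, π.Nodup ∧ π.head? = some a) (hG : ∀ π ∈ D, ∃ r, π.rotate r ∈ G) :
    #D ≤ #G := by
  choose! f hf using hG
  refine card_le_card_of_injOn (fun π => π.rotate (f π)) hf fun π hπ π' hπ' h => ?_
  exact (hD π hπ).1.eq_of_rotate_eq_rotate (by rw [(hD π hπ).2, (hD π' hπ').2]) h

variable [LinearOrder α]

open scoped Classical in
noncomputable def goodArrangements (c : α → ℝ) (j : α) (S : Finset α) : Finset (List α) :=
  S.arrangements.filter fun ρ => (ρ.map c).ProperPrefixSumsNeOne ∧ ρ.head? ≠ some j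

theorem mem_goodArrangements {c : α → ℝ} {j : α} {S : Finset α} {ρ : List α} :
    ρ ∈ goodArrangements c j S ↔
      ρ ∈ S.arrangements ∧ (ρ.map c).ProperPrefixSumsNeOne ∧ ρ.head? ≠ some j := by
  classical
  simp [goodArrangements]

theorem factorial_pred_le_card_goodArrangements (c : α → ℝ) {j : α}
    (hj : ¬ ∃ m : ℤ, (m : ℝ) = c j) {S : Finset α} (hS : ∑ i ∈ S, c i = 1) :
    (#S - 1).factorial ≤ #(goodArrangements c j S) := by
  obtain ⟨e, heS, hej⟩ : ∃ e ∈ S, j ∈ S → e = j := by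
    by_cases hjS : j ∈ S
    · exact ⟨j, hjS, fun _ => rfl⟩
    · obtain ⟨e, he⟩ : S.Nonempty := nonempty_of_sum_ne_zero (by rw [hS]; exact one_ne_zero)
      exact ⟨e, he, fun h => absurd h hjS⟩
  rw [← card_image_cons_arrangements_erase heS]
  refine card_le_card_of_forall_exists_rotate_mem (a := e)
    (forall_mem_image.mpr fun l hl =>
      ⟨(mem_arrangements.mp (cons_mem_arrangements heS hl)).1, rfl⟩)
    (forall_mem_image.mpr fun l hl => ?_)
  obtain ⟨hnd, htf⟩ := mem_arrangements.mp (cons_mem_arrangements heS hl)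
  have hsum : ((e :: l).map c).sum = 1 := by rw [← List.sum_toFinset c hnd, htf, hS]
  obtain ⟨r, hgood, hhead⟩ := exists_rotate_properPrefixSumsNeOne_head?_ne c hj hnd hsum
    fun hjl => by rw [hej (htf ▸ List.mem_toFinset.mpr hjl)]; rfl
  refine ⟨r, mem_goodArrangements.mpr ⟨mem_arrangements.mpr ⟨List.nodup_rotate.mpr hnd, ?_⟩,
    hgood, hhead⟩⟩
  rw [List.toFinset_eq_of_perm _ _ (List.rotate_perm _ _), htf]

theorem sum_card_goodArrangements_mul_add_le [Fintype α] (c : α → ℝ) (j : α) :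
    ∑ S ∈ univ.filter (fun S : Finset α => ∑ i ∈ S, c i = 1),
        #(goodArrangements c j S) * (Fintype.card α - #S).factorial
      + (Fintype.card α - 1).factorial ≤ (Fintype.card α).factorial := by
  set F := univ.filter fun S : Finset α => ∑ i ∈ S, c i = 1
  set H := (univ.erase j).arrangements.image (j :: ·)
  have hH : H ⊆ univ.arrangements := by
    simpa [H, image_subset_iff] using fun l hl => cons_mem_arrangements (mem_univ j) hl
  have hsum : ∑ S ∈ F, #(goodArrangements c j S) * (Fintype.card α - #S).factorial
      = #(F.sigma fun S => goodArrangements c j S ×ˢ Sᶜ.arrangements) := by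
    simp [card_sigma, card_product, card_arrangements, card_compl]
  have hcount : #(F.sigma fun S => goodArrangements c j S ×ˢ Sᶜ.arrangements)
      ≤ #(univ.arrangements \ H) := by
    refine card_le_card_of_injOn (fun x => x.2.1 ++ x.2.2) ?_ ?_
    · rintro ⟨S, ρ, τ⟩ hx
      simp only [coe_sigma, Set.mem_sigma_iff, coe_product, Set.mem_prod, mem_coe,
        mem_goodArrangements] at hx
      obtain ⟨hS, ⟨hρ, -, hρj⟩, hτ⟩ := hx
      have hρne : ρ ≠ [] := by
        rintro rfl
        simpa using (sum_map_of_mem_arrangements c hρ).trans (mem_filter.mp hS).2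
      refine mem_coe.mpr (mem_sdiff.mpr ⟨append_mem_arrangements hρ hτ, fun hH => hρj ?_⟩)
      obtain ⟨l, -, hl⟩ := mem_image.mp hH
      rw [← List.head?_append_of_ne_nil ρ hρne (l₂ := τ), ← show j :: l = ρ ++ τ from hl,
        List.head?_cons]
    · rintro ⟨S, ρ, τ⟩ hx ⟨S', ρ', τ'⟩ hx' (h : ρ ++ τ = ρ' ++ τ')
      simp only [coe_sigma, Set.mem_sigma_iff, coe_product, Set.mem_prod, mem_coe,
        mem_goodArrangements, F, mem_filter] at hx hx'
      obtain ⟨⟨-, hS⟩, ⟨hρ, hρgood, -⟩, -⟩ := hx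
      obtain ⟨⟨-, hS'⟩, ⟨hρ', hρgood', -⟩, -⟩ := hx'
      have hmap : ρ.map c ++ τ.map c = ρ'.map c ++ τ'.map c := by
        rw [← List.map_append, h, List.map_append]
      have hlen : ρ.length = ρ'.length := by
        simpa using le_antisymm
          (hρgood.length_le ((sum_map_of_mem_arrangements c hρ').trans hS') hmap.symm)
          (hρgood'.length_le ((sum_map_of_mem_arrangements c hρ).trans hS) hmap)
      obtain ⟨rfl, rfl⟩ := List.append_inj h hlen
      obtain rfl : S = S' := (mem_arrangements.mp hρ).2.symm.trans (mem_arrangements.mp hρ').2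
      rfl
  rw [hsum, ← card_univ, ← card_image_cons_arrangements_erase (mem_univ j), ← card_arrangements,
    ← card_sdiff_add_card_eq_card hH]
  exact Nat.add_le_add_right hcount _

end

theorem Nat.one_div_mul_choose_eq {K : Type*} [Field K] [CharZero K] {n k : ℕ} (hk : 0 < k)
    (hkn : k ≤ n) :
    (1 : K) / (k * n.choose k) = (k - 1).factorial * (n - k).factorial / n.factorial := by
  have hk' : (k : K) ≠ 0 := by exact_mod_cast hk.ne'
  rw [Nat.cast_choose K hkn, ← Nat.mul_factorial_pred hk.ne']
  push_cast
  field_simp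

theorem hyperplaneWeight_eq_sum {n : ℕ} (c : Fin n → ℝ) :
    hyperplaneWeight c = ∑ S ∈ univ.filter (fun S : Finset (Fin n) => ∑ i ∈ S, c i = 1),
      ((#S - 1).factorial * (n - #S).factorial : ℕ) / (n.factorial : ℝ) := by
  have hne {S : Finset (Fin n)} (hS : ∑ i ∈ S, c i = 1) : S.Nonempty :=
    nonempty_of_sum_ne_zero (hS ▸ one_ne_zero)
  classical
  rw [hyperplaneWeight, ← sum_filter]
  refine sum_congr (filter_congr fun S _ => and_iff_right_of_imp hne) fun S hS => ?_
  push_cast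
  exact Nat.one_div_mul_choose_eq (hne (mem_filter.mp hS).2).card_pos
    (card_le_univ S |>.trans_eq (Fintype.card_fin n))

theorem weight_le_of_fractional_coefficient_general (n : ℕ) (c : Fin n → ℝ)
    (h : ∃ i, ¬ ∃ m : ℤ, (m : ℝ) = c i) :
    hyperplaneWeight c ≤ 1 - 1 / n := by
  obtain ⟨j, hj⟩ := h
  set F := univ.filter fun S : Finset (Fin n) => ∑ i ∈ S, c i = 1
  have hcount := sum_card_goodArrangements_mul_add_le c j
  rw [Fintype.card_fin] at hcount
  have hn : n ≠ 0 := j.pos.ne'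
  calc hyperplaneWeight c
      ≤ ∑ S ∈ F, (#(goodArrangements c j S) * (n - #S).factorial : ℕ) / (n.factorial : ℝ) := by
        rw [hyperplaneWeight_eq_sum]
        gcongr with S hS
        exact factorial_pred_le_card_goodArrangements c hj (mem_filter.mp hS).2
    _ ≤ ((n.factorial - (n - 1).factorial : ℕ) : ℝ) / n.factorial := by
        rw [← sum_div]
        gcongr
        exact_mod_cast Nat.le_sub_of_add_le hcount
    _ = 1 - 1 / n := by
        rw [Nat.cast_sub (Nat.factorial_le (Nat.sub_le n 1)), ← Nat.mul_factorial_pred hn]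
        push_cast
        field_simp

theorem weight_le_of_fractional_coefficient (n : ℕ) (hn : 1 ≤ n) (c : Fin n → ℝ)
    (h : ∃ i, ¬ ∃ m : ℤ, (m : ℝ) = c i) :
    hyperplaneWeight c ≤ 1 - 1 / n :=
  weight_le_of_fractional_coefficient_general n c h
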